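/- For each natural n ≥ 8, let xₙ := √(n - 3 + 4/n) and tₙ := 1/xₙ. Then P(f_{n,tₙ}·ε ≥ xₙ) = (n+1)/2^{n+1}, where f_{n,t}·ε := √((1-t²)/n)·(ε₁ + ⋯ + εₙ) + t·ε_{n+1}. -/

import Mathlib

open MeasureTheory ProbabilityTheory Filter

/-- The standard normal tail function. -/
noncomputable def normalTail (x : ℝ) : ℝ :=
  ∫ u in Set.Ici x, (Real.sqrt (2 * Real.pi))⁻¹ * Real.exp (-u ^ 2 / 2)

/-- `ε` is a sequence of independent Rademacher random variables on `(Ω, μ)`. -/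
def IsRademacherSeq {Ω : Type*} [MeasurableSpace Ω] (μ : Measure Ω) (ε : ℕ → Ω → ℝ) : Prop :=
  (∀ i, Measurable (ε i)) ∧ iIndepFun ε μ ∧
    ∀ i, μ {ω | ε i ω = 1} = 1/2 ∧ μ {ω | ε i ω = -1} = 1/2

/-- `P(a·ε ≥ x)`, where `a·ε` is the a.s. limit of the partial sums `∑_{i<n} aᵢ εᵢ`. -/
noncomputable def tailProb {Ω : Type*} [MeasurableSpace Ω] (μ : Measure Ω) (ε : ℕ → Ω → ℝ)
    (a : ℕ → ℝ) (x : ℝ) : ℝ :=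
  (μ {ω | ∃ s, x ≤ s ∧
      Tendsto (fun n => ∑ i ∈ Finset.range n, a i * ε i ω) atTop (nhds s)}).toReal

/-- `P(eₙ·ε ≥ x) = P((ε₁+⋯+εₙ)/√n ≥ x)`. -/
noncomputable def eqTail {Ω : Type*} [MeasurableSpace Ω] (μ : Measure Ω) (ε : ℕ → Ω → ℝ)
    (n : ℕ) (x : ℝ) : ℝ :=
  (μ {ω | x ≤ (∑ i ∈ Finset.range n, ε i ω) / Real.sqrt n}).toReal

/-- `P(f_{n,t}·ε ≥ x)` where `f_{n,t}·ε = √((1-t²)/n)(ε₁+⋯+εₙ) + t ε_{n+1}`. -/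
noncomputable def fTail {Ω : Type*} [MeasurableSpace Ω] (μ : Measure Ω) (ε : ℕ → Ω → ℝ)
    (n : ℕ) (t x : ℝ) : ℝ :=
  (μ {ω | x ≤ Real.sqrt ((1 - t ^ 2) / n) * (∑ i ∈ Finset.range n, ε i ω) + t * ε n ω}).toReal

/-- The maximal tail `M(x)`: supremum of `P(a·ε ≥ x)` over the unit sphere of `ℓ²`. -/
noncomputable def Mtail {Ω : Type*} [MeasurableSpace Ω] (μ : Measure Ω) (ε : ℕ → Ω → ℝ)
    (x : ℝ) : ℝ :=
  sSup {p | ∃ a : ℕ → ℝ, (∑' i, (a i) ^ 2) = 1 ∧ p = tailProb μ ε a x}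

/-- `M⁼(x) = sup_{n ≥ 1} P(eₙ·ε ≥ x)`. -/
noncomputable def Meq {Ω : Type*} [MeasurableSpace Ω] (μ : Measure Ω) (ε : ℕ → Ω → ℝ)
    (x : ℝ) : ℝ :=
  sSup {p | ∃ n : ℕ, 1 ≤ n ∧ p = eqTail μ ε n x}

/-- `Mₙ(x)`: supremum over unit vectors supported on the first `n` coordinates. -/
noncomputable def Mn {Ω : Type*} [MeasurableSpace Ω] (μ : Measure Ω) (ε : ℕ → Ω → ℝ)
    (n : ℕ) (x : ℝ) : ℝ :=
  sSup {p | ∃ a : ℕ → ℝ, (∑' i, (a i) ^ 2) = 1 ∧ (∀ i, n ≤ i → a i = 0) ∧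
    p = tailProb μ ε a x}

/-- `M⁼ₙ(x) = max_{1 ≤ j ≤ n} P(e_j·ε ≥ x)`. -/
noncomputable def Meqn {Ω : Type*} [MeasurableSpace Ω] (μ : Measure Ω) (ε : ℕ → Ω → ℝ)
    (n : ℕ) (x : ℝ) : ℝ :=
  sSup {p | ∃ j : ℕ, 1 ≤ j ∧ j ≤ n ∧ p = eqTail μ ε j x}

/-!
Write `x = xₙ`, `t = 1 / x`, `S = ε₁ + ⋯ + εₙ`, and let `k` be the number of minus signs
among `ε₁, …, εₙ`, so that `S = n - 2k`. Since `n x² = n² - 3n + 4`, one has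
`√((1 - t²)/n) = (n - 2)/(n x)`, and the event `f_{n,t}·ε ≥ x` becomes
`n² - 3n + 4 ≤ (n - 2)(n - 2k) + n ε_{n+1}`. This holds exactly when `ε_{n+1} = 1` and `k ≤ 1`,
i.e. for `n + 1` of the `2^{n+1}` equally likely sign patterns of `(ε₁, …, ε_{n+1})`.
-/

open Finset

namespace IsRademacherSeq

variable {Ω : Type*} [MeasurableSpace Ω] {μ : Measure Ω} {ε : ℕ → Ω → ℝ}

lemma measure_preimage_sign (hε : IsRademacherSeq μ ε) (i : ℕ) {v : ℝ}
    (hv : v = 1 ∨ v = -1) :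
    μ (ε i ⁻¹' {v}) = 2⁻¹ := by
  rw [← one_div]
  rcases hv with rfl | rfl
  exacts [(hε.2.2 i).1, (hε.2.2 i).2]

lemma ae_eq_one_or_eq_neg_one [IsProbabilityMeasure μ] (hε : IsRademacherSeq μ ε) :
    ∀ᵐ ω ∂μ, ∀ i, ε i ω = 1 ∨ ε i ω = -1 := by
  refine ae_all_iff.2 fun i => ?_
  have hdisj : Disjoint (ε i ⁻¹' {1}) (ε i ⁻¹' {-1}) :=
    (Set.disjoint_singleton.2 (by norm_num)).preimage _
  have h : μ (ε i ⁻¹' {1} ∪ ε i ⁻¹' {-1}) = 1 := by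
    rw [measure_union hdisj (hε.1 i (measurableSet_singleton _)),
      hε.measure_preimage_sign i (Or.inl rfl), hε.measure_preimage_sign i (Or.inr rfl),
      ENNReal.inv_two_add_inv_two]
  exact (mem_ae_iff_prob_eq_one ((hε.1 i (measurableSet_singleton _)).union
    (hε.1 i (measurableSet_singleton _)))).2 h

lemma measure_cylinder (hε : IsRademacherSeq μ ε) {m : ℕ} {u : Fin m → ℝ}
    (hu : ∀ i, u i = 1 ∨ u i = -1) :
    μ {ω | (fun i : Fin m => ε i ω) = u} = 2⁻¹ ^ m := by
  have hindep : iIndepFun (fun i : Fin m => ε i) μ := hε.2.1.precomp Fin.val_injective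
  have h := hindep.measure_inter_preimage_eq_mul univ (sets := fun i => {u i})
    fun i _ => measurableSet_singleton _
  have hset : {ω | (fun i : Fin m => ε i ω) = u} =
      ⋂ i ∈ (univ : Finset (Fin m)), ε i ⁻¹' {u i} := by
    ext ω
    simp [funext_iff]
  rw [hset, h, prod_congr rfl fun (i : Fin m) _ => hε.measure_preimage_sign i (hu i), prod_const,
    card_univ, Fintype.card_fin]

lemma measure_mem_finset (hε : IsRademacherSeq μ ε) {m : ℕ} (U : Finset (Fin m → ℝ))
    (hU : ∀ u ∈ U, ∀ i, u i = 1 ∨ u i = -1) :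
    μ {ω | (fun i : Fin m => ε i ω) ∈ U} = #U * 2⁻¹ ^ m := by
  have hmeas : Measurable fun ω (i : Fin m) => ε i ω := measurable_pi_lambda _ fun i => hε.1 i
  have hset : {ω | (fun i : Fin m => ε i ω) ∈ U} =
      ⋃ u ∈ U, {ω | (fun i : Fin m => ε i ω) = u} := by
    ext ω
    simp
  rw [hset, measure_biUnion_finset, sum_congr rfl fun u hu => hε.measure_cylinder (hU u hu),
    sum_const, nsmul_eq_mul]
  · intro u _ v _ huv
    exact Set.disjoint_left.2 fun ω hu hv => huv (hu.symm.trans hv)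
  · exact fun u _ => hmeas (measurableSet_singleton u)

end IsRademacherSeq

lemma sum_eq_card_sub_two_mul_card_filter {ι : Type*} [Fintype ι] {v : ι → ℝ}
    (hv : ∀ i, v i = 1 ∨ v i = -1) :
    ∑ i, v i = Fintype.card ι - 2 * #{i | v i = -1} := by
  classical
  have h : ∀ i, v i = 1 - 2 * if v i = -1 then 1 else 0 := fun i => by
    rcases hv i with h | h <;> norm_num [h]
  rw [sum_congr rfl fun i _ => h i, sum_sub_distrib, ← mul_sum, sum_boole]
  simp

def singleFlip (n : ℕ) : Option (Fin n) → Fin (n + 1) → ℝ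
  | none => 1
  | some j => Function.update 1 j.castSucc (-1)

lemma singleFlip_apply_eq_one_or_eq_neg_one {n : ℕ} (j : Option (Fin n)) (i : Fin (n + 1)) :
    singleFlip n j i = 1 ∨ singleFlip n j i = -1 := by
  rcases j with _ | j
  · simp [singleFlip]
  · by_cases h : i = j.castSucc <;> simp [singleFlip, h]

lemma singleFlip_injective (n : ℕ) : (singleFlip n).Injective := by
  rintro (_ | j) (_ | k) h
  · rfl
  · exact absurd (congrFun h k.castSucc) (by norm_num [singleFlip])
  · exact absurd (congrFun h j.castSucc) (by norm_num [singleFlip])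
  · rw [Option.some_inj]
    by_contra hjk
    have := congrFun h j.castSucc
    norm_num [singleFlip, Function.update_of_ne (Fin.castSucc_injective n |>.ne hjk)] at this

lemma mem_range_singleFlip_iff {n : ℕ} {u : Fin (n + 1) → ℝ}
    (hu : ∀ i, u i = 1 ∨ u i = -1) :
    u ∈ Set.range (singleFlip n) ↔
      u (Fin.last n) = 1 ∧ #{i : Fin n | u i.castSucc = -1} ≤ 1 := by
  have hflip : ∀ i : Fin n, u i.castSucc ≠ -1 → u i.castSucc = 1 :=
    fun i => (hu _).resolve_right
  constructor
  · rintro ⟨_ | j, rfl⟩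
    · norm_num [singleFlip]
    · refine ⟨by simp [singleFlip, (Fin.castSucc_lt_last j).ne'],
        card_le_one.2 fun a ha b hb => ?_⟩
      norm_num [singleFlip, Function.update_apply] at ha hb
      rw [ha, hb]
  · rintro ⟨hlast, hcard⟩
    rcases Nat.le_one_iff_eq_zero_or_eq_one.1 hcard with h0 | h1
    · refine ⟨none, funext fun i => ?_⟩
      induction i using Fin.lastCases with
      | last => exact hlast.symm
      | cast i =>
        rw [card_eq_zero, filter_eq_empty_iff] at h0
        exact (hflip i (h0 (mem_univ i))).symm
    · obtain ⟨j, hj⟩ := card_eq_one.1 h1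
      refine ⟨some j, funext fun i => ?_⟩
      induction i using Fin.lastCases with
      | last => simpa [singleFlip, (Fin.castSucc_lt_last j).ne'] using hlast.symm
      | cast i =>
        have hi : u i.castSucc = -1 ↔ i = j := by simpa using Finset.ext_iff.1 hj i
        by_cases hij : i = j
        · subst hij
          simp [singleFlip, hi.2 rfl]
        · simp [singleFlip, hij, hflip i (mt hi.1 hij)]

lemma sub_three_add_four_div_pos {N : ℝ} (hN : 0 < N) : 0 < N - 3 + 4 / N := by
  have : N - 3 + 4 / N = ((N - 3 / 2) ^ 2 + 7 / 4) / N := by field_simp; ring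
  rw [this]
  positivity

lemma sqrt_one_sub_inv_sq_div {N : ℝ} (hN : 2 ≤ N) :
    √((1 - (1 / √(N - 3 + 4 / N)) ^ 2) / N) = (N - 2) / (N * √(N - 3 + 4 / N)) := by
  have hpos := sub_three_add_four_div_pos (by linarith : 0 < N)
  have hx := Real.sq_sqrt hpos.le
  have hxpos := Real.sqrt_pos.2 hpos
  generalize √(N - 3 + 4 / N) = x at hx hxpos ⊢
  rw [← Real.sqrt_sq (div_nonneg (by linarith) (by positivity : 0 ≤ N * x))]
  congr 1
  field_simp
  rw [hx]
  field_simp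
  ring

lemma sqrt_le_iff_quadratic_le {N S e : ℝ} (hN : 2 ≤ N) :
    √(N - 3 + 4 / N) ≤
        √((1 - (1 / √(N - 3 + 4 / N)) ^ 2) / N) * S + 1 / √(N - 3 + 4 / N) * e ↔
      N ^ 2 - 3 * N + 4 ≤ (N - 2) * S + N * e := by
  have hpos := sub_three_add_four_div_pos (by linarith : 0 < N)
  have hx := Real.sq_sqrt hpos.le
  have hxpos := Real.sqrt_pos.2 hpos
  rw [sqrt_one_sub_inv_sq_div hN]
  generalize √(N - 3 + 4 / N) = x at hx hxpos ⊢
  have hNx : x * (N * x) = N ^ 2 - 3 * N + 4 := by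
    rw [mul_left_comm, ← sq, hx]
    field_simp
  rw [show (N - 2) / (N * x) * S + 1 / x * e = ((N - 2) * S + N * e) / (N * x) by
    field_simp, le_div_iff₀ (by positivity), hNx]

lemma quadratic_le_iff {N : ℝ} (hN : 2 < N) {k : ℕ} {e : ℝ} (he : e = 1 ∨ e = -1) :
    N ^ 2 - 3 * N + 4 ≤ (N - 2) * (N - 2 * k) + N * e ↔ e = 1 ∧ k ≤ 1 := by
  rcases he with rfl | rfl
  · rw [← Nat.cast_le_one (α := ℝ)]
    exact ⟨fun h => ⟨rfl, by nlinarith⟩, fun ⟨_, h⟩ => by nlinarith⟩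
  · simp only [show (-1 : ℝ) ≠ 1 by norm_num, false_and, iff_false, not_le]
    nlinarith [(Nat.cast_nonneg k : (0 : ℝ) ≤ k)]

lemma sqrt_le_iff_mem_range_singleFlip {n : ℕ} (hn : 2 < n) {u : Fin (n + 1) → ℝ}
    (hu : ∀ i, u i = 1 ∨ u i = -1) :
    √((n : ℝ) - 3 + 4 / n) ≤ √((1 - (1 / √((n : ℝ) - 3 + 4 / n)) ^ 2) / n) *
        ∑ i : Fin n, u i.castSucc + 1 / √((n : ℝ) - 3 + 4 / n) * u (Fin.last n) ↔
      u ∈ Set.range (singleFlip n) := by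
  rw [sqrt_le_iff_quadratic_le (by exact_mod_cast hn.le),
    sum_eq_card_sub_two_mul_card_filter fun i => hu i.castSucc, Fintype.card_fin,
    quadratic_le_iff (by exact_mod_cast hn) (hu _), mem_range_singleFlip_iff hu]

theorem rademacher_zhubr_fTail_value {Ω : Type*} [MeasurableSpace Ω] (μ : MeasureTheory.Measure Ω)
    [MeasureTheory.IsProbabilityMeasure μ] (ε : ℕ → Ω → ℝ) (hε : IsRademacherSeq μ ε)
    (n : ℕ) (hn : 8 ≤ n) :
    fTail μ ε n (1 / Real.sqrt ((n : ℝ) - 3 + 4 / n)) (Real.sqrt ((n : ℝ) - 3 + 4 / n)) =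
      ((n : ℝ) + 1) / 2 ^ (n + 1) := by
  have hevent : {ω | √((n : ℝ) - 3 + 4 / n) ≤
        √((1 - (1 / √((n : ℝ) - 3 + 4 / n)) ^ 2) / n) * ∑ i ∈ range n, ε i ω +
          1 / √((n : ℝ) - 3 + 4 / n) * ε n ω} =ᵐ[μ]
      {ω | (fun i : Fin (n + 1) => ε i ω) ∈ univ.image (singleFlip n)} := by
    refine Filter.eventuallyEq_set.2 ?_
    filter_upwards [hε.ae_eq_one_or_eq_neg_one] with ω hω
    have h := sqrt_le_iff_mem_range_singleFlip (by omega) fun i : Fin (n + 1) => hω i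
    simp only [Fin.val_castSucc, Fin.val_last, Fin.sum_univ_eq_sum_range (ε · ω)] at h
    rwa [← mem_coe, coe_image, coe_univ, Set.image_univ]
  rw [fTail, measure_congr hevent,
    hε.measure_mem_finset _ (by simp [singleFlip_apply_eq_one_or_eq_neg_one]),
    card_image_of_injective _ (singleFlip_injective n), card_univ, Fintype.card_option,
    Fintype.card_fin, ENNReal.toReal_mul, ENNReal.toReal_pow, ENNReal.toReal_natCast,
    ENNReal.toReal_inv, ENNReal.toReal_ofNat]
  push_cast
  rw [inv_pow, pow_succ]
  field_simp
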